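/- The codes C_{H,g} and C_{H,h} (built from the same extended Hamming code H of length n = 2^{m'+m''}, using the direct-sum operator g and the multiplication-by-primitive-element operator h respectively) are nonequivalent: there is no coordinate permutation π and vector z ∈ {0,1}^n with C_{H,g} = π(C_{H,h}) + z. -/
import Mathlib


/-- Binary words of length `n`. -/
abbrev BW (n : ℕ) := Fin n → ZMod 2

/-- Ternary words of length `n` over `{0,1,*}`, with `none` playing the role of `*`. -/
abbrev TW (n : ℕ) := Fin n → Option (ZMod 2)

/-- Coset `{ x ∈ F^n : Σ x_i = ε, Σ x_i α_i = β }`, with syndromes in a `GF(2)`-module. -/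
def coset {n : ℕ} {V : Type*} [AddCommMonoid V] [Module (ZMod 2) V]
    (α : Fin n → V) (ε : ZMod 2) (β : V) : Set (BW n) :=
  {x | (∑ i, x i) = ε ∧ (∑ i, x i • α i) = β}

/-- `r(p)` for an edge `{p, q}`: `*` where `p` and `q` differ, `p` elsewhere. -/
def rword {n : ℕ} (p q : BW n) : TW n := fun i => if p i = q i then some (p i) else none

/-- The code `C_{H,f} = ⋃_{β} R(H^0_β, H^1_{f β})`. -/
def CHf {n : ℕ} {V : Type*} [AddCommMonoid V] [Module (ZMod 2) V]
    (α : Fin n → V) (f : V → V) : Set (TW n) :=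
  {c | ∃ (β : V) (p q : BW n), p ∈ coset α 0 β ∧ q ∈ coset α 1 (f β) ∧
        hammingDist p q = 1 ∧ c = rword p q}

/-- Addition of a ternary symbol and a binary symbol, with `* + 0 = * + 1 = *`. -/
def addStar : Option (ZMod 2) → ZMod 2 → Option (ZMod 2)
  | none, _ => none
  | some a, b => some (a + b)

/-- The action of an equivalence candidate `(π, z)` on a ternary word: `π(w) + z`. -/
def act {n : ℕ} (π : Equiv.Perm (Fin n)) (z : BW n) (w : TW n) : TW n :=
  fun i => addStar (w (π.symm i)) (z i)

-- ############ helpers start here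

def starAt {n : ℕ} (i : Fin n) (p : BW n) : TW n :=
  fun t => if t = i then none else some (p t)

lemma z2add (a : ZMod 2) : a + a = 0 := by revert a; decide

lemma z2ne (a : ZMod 2) : a ≠ a + 1 := by revert a; decide

lemma z2ne' (a b : ZMod 2) (h : a ≠ b) : b = a + 1 := by revert h; revert a b; decide

lemma mem_CHf_iff {n : ℕ} {V : Type*} [AddCommMonoid V] [Module (ZMod 2) V]
    (α : Fin n → V) (f : V → V) (c : TW n) :
    c ∈ CHf α f ↔ ∃ (i : Fin n) (p : BW n), (∑ t, p t) = 0 ∧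
      f (∑ t, p t • α t) = (∑ t, p t • α t) + α i ∧ c = starAt i p := by
  constructor
  · rintro ⟨β, p, q, ⟨hp0, hpβ⟩, ⟨hq1, hqβ⟩, hd, hc⟩
    unfold hammingDist at hd
    obtain ⟨i, hi⟩ := Finset.card_eq_one.mp hd
    have hne : ∀ t, p t ≠ q t ↔ t = i := by
      intro t
      constructor
      · intro ht
        have hmem : t ∈ Finset.filter (fun u => p u ≠ q u) Finset.univ := by simp [ht]
        rw [hi] at hmem; simpa using hmem
      · intro ht
        rw [ht]
        have hmem : i ∈ Finset.filter (fun u => p u ≠ q u) Finset.univ := by rw [hi]; simp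
        simpa using hmem
    have hq : q = fun t => p t + if t = i then 1 else 0 := by
      funext t
      by_cases ht : t = i
      · subst ht
        simpa using z2ne' _ _ ((hne t).mpr rfl)
      · have h1 : ¬ (p t ≠ q t) := fun hcon => ht ((hne t).mp hcon)
        simp [ht, (not_not.mp h1).symm]
    refine ⟨i, p, hp0, ?_, ?_⟩
    · rw [hpβ]
      rw [← hqβ, hq]
      simp [add_smul, ite_smul, Finset.sum_add_distrib, hpβ]
    · rw [hc]
      funext t
      by_cases ht : t = i
      · subst ht
        have : p t ≠ q t := (hne t).mpr rfl
        simp [rword, starAt, this]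
      · have h1 : ¬ (p t ≠ q t) := fun hcon => ht ((hne t).mp hcon)
        simp [rword, starAt, ht, not_not.mp h1]
  · rintro ⟨i, p, hp0, hf, hc⟩
    refine ⟨∑ t, p t • α t, p, fun t => p t + if t = i then 1 else 0,
      ⟨hp0, rfl⟩, ⟨?_, ?_⟩, ?_, ?_⟩
    · simp [Finset.sum_add_distrib, hp0]
    · rw [hf]
      simp [add_smul, ite_smul, Finset.sum_add_distrib]
    · unfold hammingDist
      have : Finset.filter (fun t => p t ≠ p t + if t = i then 1 else 0) Finset.univ
          = Finset.filter (fun t => t = i) Finset.univ := by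
        apply Finset.filter_congr
        intro t _
        by_cases ht : t = i <;> simp [ht, z2ne]
      rw [this, Finset.filter_eq']
      simp
    · rw [hc]
      funext t
      by_cases ht : t = i
      · subst ht
        simp [rword, starAt, z2ne]
      · simp [rword, starAt, ht]

lemma act_starAt {n : ℕ} (π : Equiv.Perm (Fin n)) (z : BW n) (i : Fin n) (p : BW n) :
    act π z (starAt i p) = starAt (π i) (fun t => p (π.symm t) + z t) := by
  funext t
  show addStar (if π.symm t = i then none else some (p (π.symm t))) (z t)
      = if t = π i then none else some (p (π.symm t) + z t)
  have hiff : (π.symm t = i) ↔ (t = π i) := by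
    constructor
    · intro hh; rw [← hh]; simp
    · intro hh; rw [hh]; simp
  by_cases h : t = π i
  · rw [if_pos h, if_pos (hiff.mpr h)]; rfl
  · rw [if_neg h, if_neg (fun hh => h (hiff.mp hh))]; rfl

lemma starAt_eq {n : ℕ} {i i' : Fin n} {p p' : BW n} (hE : starAt i p = starAt i' p') :
    i' = i ∧ ∀ t, t ≠ i → p t = p' t := by
  have hii : i' = i := by
    by_contra hcon
    have h1 := congrFun hE i
    have hni : i ≠ i' := fun hh => hcon hh.symm
    simp [starAt, hni] at h1
  subst hii
  refine ⟨rfl, fun t ht => ?_⟩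
  have h2 := congrFun hE t
  simpa [starAt, ht] using h2

lemma inv_mem {F : Type*} [Field F] [Fintype F] (Vs : Set F) (c : F) (hc : c ≠ 0)
    (hmul : ∀ v ∈ Vs, c * v ∈ Vs) : ∀ v ∈ Vs, c⁻¹ * v ∈ Vs := by
  have hinj : Function.Injective (fun x : Vs => (⟨c * x, hmul x x.2⟩ : Vs)) := by
    intro a b hab
    exact Subtype.ext (mul_left_cancel₀ hc (congrArg Subtype.val hab))
  have hsurj := Finite.surjective_of_injective hinj
  intro v hv
  obtain ⟨⟨u, hu⟩, heq⟩ := hsurj ⟨v, hv⟩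
  have h1 : c * u = v := congrArg Subtype.val heq
  have h2 : c⁻¹ * v = u := by rw [← h1, inv_mul_cancel_left₀ hc]
  rw [h2]; exact hu

lemma Vs_univ {F : Type*} [Field F] [Fintype F] (γ : F)
    (hprim : ∀ x : F, x ≠ 0 → ∃ j : ℕ, γ ^ j = x)
    (Vs : Set F) (hγmul : ∀ v ∈ Vs, γ * v ∈ Vs)
    (w0 : F) (hw0 : w0 ∈ Vs) (hw0n : w0 ≠ 0) : ∀ y : F, y ≠ 0 → y ∈ Vs := by
  have hpow : ∀ (j : ℕ) (v : F), v ∈ Vs → γ ^ j * v ∈ Vs := by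
    intro j
    induction j with
    | zero => intro v hv; simpa using hv
    | succ k ih =>
        intro v hv
        have h2 : γ ^ (k + 1) * v = γ * (γ ^ k * v) := by ring
        rw [h2]
        exact hγmul _ (ih v hv)
  intro y hy
  have hq : y * w0⁻¹ ≠ 0 := mul_ne_zero hy (inv_ne_zero hw0n)
  obtain ⟨j, hj⟩ := hprim _ hq
  have : γ ^ j * w0 = y := by
    rw [hj]
    field_simp
  exact this ▸ hpow j w0 hw0

lemma gamma_ne {F : Type*} [Field F] [Fintype F] (hc : 3 ≤ Fintype.card F) (γ : F)
    (hprim : ∀ x : F, x ≠ 0 → ∃ j : ℕ, γ ^ j = x) : γ ≠ 0 ∧ γ ≠ 1 := by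
  have key : (γ = 0 ∨ γ = 1) → False := by
    intro hcase
    classical
    have hall : ∀ x : F, x = 0 ∨ x = 1 := by
      intro x
      by_cases hx : x = 0
      · exact Or.inl hx
      · obtain ⟨j, hj⟩ := hprim x hx
        rcases hcase with h0 | h1
        · subst h0
          rcases Nat.eq_zero_or_pos j with hj0 | hj0
          · subst hj0; right; rw [← hj]; norm_num
          · left; rw [← hj, zero_pow (by omega : j ≠ 0)]
        · subst h1; right; rw [← hj, one_pow]
    have hsub : (Finset.univ : Finset F) ⊆ {0, 1} := by
      intro x _
      rcases hall x with h | h <;> simp [h]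
    have := Finset.card_le_card hsub
    have h01 : ({0, 1} : Finset F).card ≤ 2 := Finset.card_insert_le _ _ |>.trans (by simp)
    rw [Finset.card_univ] at this
    omega
  exact ⟨fun h => key (Or.inl h), fun h => key (Or.inr h)⟩

lemma z2solve (a b : ZMod 2) (h : 0 = a + b) : b = a := by revert a b; decide

lemma z2cases (a : ZMod 2) : a = 0 ∨ a = 1 := by revert a; decide

/-- the codes `C_{H,g}` and `C_{H,h}` (built from the same extended Hamming
code `H` of length `n = 2^(m'+m'')`, using the direct-sum operator `g(x',x'') =
(f' x', f'' x'')` and the multiplication-by-a-primitive-element operator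
`h = φ⁻¹ ∘ (γ · ) ∘ φ`, where `φ : F^{m'+m''} ≃+ GF(2^(m'+m''))`) are nonequivalent:
there is no coordinate permutation `π` and vector `z` with `C_{H,g} = π(C_{H,h}) + z`. -/
theorem stmt15 {m' m'' : ℕ} (hm' : 1 ≤ m') (hm'' : 1 ≤ m'')
    (α : Fin (2 ^ (m' + m'')) → ((Fin m' ⊕ Fin m'') → ZMod 2))
    (hα : Function.Bijective α)
    (hαsplit : ∀ i : Fin (2 ^ (m' + m'')),
      (i : ℕ) < 2 ^ m' ↔ ∀ j : Fin m'', α i (Sum.inr j) = 0)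
    (f' : BW m' → BW m') (f'' : BW m'' → BW m'')
    (hlin' : IsLinearMap (ZMod 2) f') (hbij' : Function.Bijective f')
    (hid' : Function.Bijective (fun x => f' x + x))
    (hlin'' : IsLinearMap (ZMod 2) f'') (hbij'' : Function.Bijective f'')
    (hid'' : Function.Bijective (fun x => f'' x + x))
    (F : Type*) [Field F] [Fintype F] (hF : Fintype.card F = 2 ^ (m' + m''))
    (φ : ((Fin m' ⊕ Fin m'') → ZMod 2) ≃+ F)
    (γ : F) (hγ : ∀ x : F, x ≠ 0 → ∃ j : ℕ, γ ^ j = x) :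
    let g : ((Fin m' ⊕ Fin m'') → ZMod 2) → ((Fin m' ⊕ Fin m'') → ZMod 2) :=
      fun x => Sum.elim (f' (fun j => x (Sum.inl j))) (f'' (fun j => x (Sum.inr j)))
    let h : ((Fin m' ⊕ Fin m'') → ZMod 2) → ((Fin m' ⊕ Fin m'') → ZMod 2) :=
      fun x => φ.symm (γ * φ x)
    ¬ ∃ (π : Equiv.Perm (Fin (2 ^ (m' + m'')))) (z : BW (2 ^ (m' + m''))),
        CHf α g = act π z '' CHf α h := by
  intro g h
  rintro ⟨π, z, hEq⟩
  classical
  -- char-2 facts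
  have hv2 : ∀ v : (Fin m' ⊕ Fin m'') → ZMod 2, v + v = 0 :=
    fun v => funext fun t => z2add (v t)
  have hsw : ∀ a c : (Fin m' ⊕ Fin m'') → ZMod 2, (a + c) + a = c := by
    intro a c
    have hh : (a + c) + a = c + (a + a) := by ring
    rw [hh, hv2, add_zero]
  have hcancel : ∀ a b : (Fin m' ⊕ Fin m'') → ZMod 2, a + b = 0 → a = b := by
    intro a b hab
    have hh : a = (a + b) + b := by rw [add_assoc, hv2, add_zero]
    rw [hab, zero_add] at hh
    exact hh
  -- γ is neither 0 nor 1
  have hcard3 : 3 ≤ Fintype.card F := by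
    rw [hF]
    have h22 : 2 ^ 2 ≤ 2 ^ (m' + m'') := Nat.pow_le_pow_right (by norm_num) (by omega)
    omega
  obtain ⟨hγ0, hγ1⟩ := gamma_ne hcard3 γ hγ
  -- F has characteristic 2 (via φ)
  have hF2 : ∀ x : F, x + x = 0 := by
    intro x
    have hx : x = φ (φ.symm x) := (φ.apply_symm_apply x).symm
    rw [hx, ← map_add, hv2, map_zero]
  -- unfolding of g and h
  have hgdef : ∀ x, g x = Sum.elim (f' (fun j => x (Sum.inl j))) (f'' (fun j => x (Sum.inr j))) :=
    fun x => rfl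
  have hhdef : ∀ x, h x = φ.symm (γ * φ x) := fun x => rfl
  have hgadd : ∀ x y, g (x + y) = g x + g y := by
    intro x y
    have h1 : (fun j => (x + y) (Sum.inl j))
        = (fun j => x (Sum.inl j)) + (fun j => y (Sum.inl j)) := rfl
    have h2 : (fun j => (x + y) (Sum.inr j))
        = (fun j => x (Sum.inr j)) + (fun j => y (Sum.inr j)) := rfl
    rw [hgdef, hgdef, hgdef, h1, h2, hlin'.map_add, hlin''.map_add]
    funext t
    cases t with
    | inl j => rfl
    | inr j => rfl
  have hG1inj : ∀ x y, g x + x = g y + y → x = y := by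
    intro x y hxy
    rw [hgdef x, hgdef y] at hxy
    have hl : (fun j => x (Sum.inl j)) = (fun j => y (Sum.inl j)) := by
      apply hid'.injective
      funext j
      exact congrFun hxy (Sum.inl j)
    have hr : (fun j => x (Sum.inr j)) = (fun j => y (Sum.inr j)) := by
      apply hid''.injective
      funext j
      exact congrFun hxy (Sum.inr j)
    funext t
    cases t with
    | inl j => exact congrFun hl j
    | inr j => exact congrFun hr j
  have hh0 : h 0 = 0 := by rw [hhdef]; simp
  -- the inverse of α
  set es : ((Fin m' ⊕ Fin m'') → ZMod 2) → Fin (2 ^ (m' + m'')) :=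
    ⇑(Equiv.ofBijective α hα).symm with hesdef
  have he : ∀ v, α (es v) = v := by
    intro v
    rw [hesdef]
    exact Equiv.ofBijective_apply_symm_apply α hα v
  set ζ : ZMod 2 := ∑ t, z t with hζdef
  set s : (Fin m' ⊕ Fin m'') → ZMod 2 := ∑ t, z t • α t with hsdef
  -- the master equation
  have master : ∀ p : BW (2 ^ (m' + m'')), (∑ t, p t) = 0 →
      g ((∑ t, p t • α (π t)) + s + ζ • α (π (es (h (∑ t, p t • α t) + ∑ t, p t • α t))))
        = ((∑ t, p t • α (π t)) + s + ζ • α (π (es (h (∑ t, p t • α t) + ∑ t, p t • α t))))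
          + α (π (es (h (∑ t, p t • α t) + ∑ t, p t • α t))) := by
    intro p hp0
    set β := ∑ t, p t • α t with hβ
    set j := es (h β + β) with hj
    have hαj : α j = h β + β := by rw [hj]; exact he _
    have hcmem : starAt j p ∈ CHf α h := by
      rw [mem_CHf_iff]
      refine ⟨j, p, hp0, ?_, rfl⟩
      rw [← hβ, hαj, add_comm (h β) β, ← add_assoc, hv2, zero_add]
    have hmem : act π z (starAt j p) ∈ CHf α g := by
      rw [hEq]
      exact Set.mem_image_of_mem _ hcmem
    rw [act_starAt, mem_CHf_iff] at hmem
    obtain ⟨i', p', hp'0, hgp', hcc⟩ := hmem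
    obtain ⟨hii, hpp⟩ := starAt_eq hcc
    subst hii
    have hpp' : ∀ t, t ≠ π j → p (π.symm t) + z t = p' t := hpp
    have hsumP : (∑ t, (p (π.symm t) + z t)) = ζ := by
      rw [Finset.sum_add_distrib, Equiv.sum_comp π.symm (fun t => p t), hp0, zero_add]
    set d := p' (π j) + (p (π.symm (π j)) + z (π j)) with hddef
    have hp'full : p' = fun t => (p (π.symm t) + z t) + if t = π j then d else 0 := by
      funext t
      by_cases ht : t = π j
      · rw [ht, if_pos rfl, hddef]
        have hr : (p (π.symm (π j)) + z (π j)) + (p' (π j) + (p (π.symm (π j)) + z (π j)))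
            = p' (π j) + ((p (π.symm (π j)) + z (π j)) + (p (π.symm (π j)) + z (π j))) := by
          ring
        rw [hr, z2add, add_zero]
      · rw [if_neg ht, add_zero]
        exact (hpp' t ht).symm
    have hsum1 : (∑ t, p' t) = ζ + d := by
      simp only [hp'full]
      rw [Finset.sum_add_distrib, hsumP]
      congr 1
      simp
    have hd : d = ζ := z2solve _ _ (by rw [← hp'0]; exact hsum1)
    have hsyn : (∑ t, p' t • α t) = (∑ t, p t • α (π t)) + s + ζ • α (π j) := by
      simp only [hp'full, hd]
      simp only [add_smul, ite_smul, zero_smul]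
      rw [Finset.sum_add_distrib, Finset.sum_add_distrib]
      have hre : (∑ t, p (π.symm t) • α t) = ∑ t, p t • α (π t) := by
        have h1 := Equiv.sum_comp π (fun t => p (π.symm t) • α t)
        simp only [Equiv.symm_apply_apply] at h1
        exact h1.symm
      rw [hre, ← hsdef]
      congr 1
      simp
    rw [hsyn] at hgp'
    exact hgp'
  -- the linearity relation
  have K : ∀ w : BW (2 ^ (m' + m'')), (∑ t, w t) = 0 → (∑ t, w t • α t) = 0 →
      (∑ t, w t • α (π t)) = 0 := by
    intro w hw0 hwα
    have h1 := master (fun _ => 0) (by simp)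
    have h2 := master w hw0
    simp only [zero_smul, Finset.sum_const_zero, zero_add, add_zero, hh0] at h1
    rw [hwα] at h2
    simp only [hh0, add_zero] at h2
    have hXY : (∑ t, w t • α (π t)) + s + ζ • α (π (es 0))
        = 0 + s + ζ • α (π (es 0)) := by
      apply hG1inj
      rw [zero_add, h1, h2, hsw, hsw]
    exact add_right_cancel (add_right_cancel hXY)
  -- the affine map A
  set c0 : (Fin m' ⊕ Fin m'') → ZMod 2 := α (π (es 0)) with hc0def
  set A : ((Fin m' ⊕ Fin m'') → ZMod 2) → ((Fin m' ⊕ Fin m'') → ZMod 2) :=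
    fun v => α (π (es v)) + c0 with hAdef
  have hLA : ∀ v, α (π (es v)) = A v + c0 := by
    intro v
    simp only [hAdef]
    rw [add_assoc, hv2, add_zero]
  have hAadd : ∀ u v, A (u + v) = A u + A v := by
    intro u v
    have hK := K (fun t => (if t = es u then (1 : ZMod 2) else 0) +
        ((if t = es v then 1 else 0) + ((if t = es (u + v) then 1 else 0) +
          (if t = es 0 then 1 else 0))))
      (by simp [Finset.sum_add_distrib, Finset.sum_ite_eq']; decide)
      (by
        simp [add_smul, ite_smul, Finset.sum_add_distrib, Finset.sum_ite_eq', he]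
        rw [show u + (v + (u + v)) = (u + v) + (u + v) by ring, hv2])
    simp only [add_smul, ite_smul, one_smul, zero_smul, Finset.sum_add_distrib,
      Finset.sum_ite_eq', Finset.mem_univ, if_true] at hK
    apply hcancel
    simp only [hAdef]
    have hrw : (α (π (es (u + v))) + c0) + ((α (π (es u)) + c0) + (α (π (es v)) + c0))
        = (α (π (es u)) + (α (π (es v)) + (α (π (es (u + v))) + α (π (es 0)))))
          + (c0 + c0) := by
      rw [hc0def]; ring
    rw [hrw, hK, hv2, add_zero]
  have hA0 : A 0 = 0 := by
    simp only [hAdef]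
    exact hv2 _
  have hLbij : Function.Bijective (fun v => α (π (es v))) := by
    have h1 : (fun v : ((Fin m' ⊕ Fin m'') → ZMod 2) => α (π (es v)))
        = ⇑(Equiv.ofBijective α hα) ∘ ⇑π ∘ ⇑(Equiv.ofBijective α hα).symm := by
      funext v
      rw [hesdef]
      rfl
    rw [h1]
    exact (Equiv.ofBijective α hα).bijective.comp
      (π.bijective.comp (Equiv.ofBijective α hα).symm.bijective)
  have hAbij : Function.Bijective A := by
    constructor
    · intro a b hab
      apply hLbij.1
      simp only [hAdef] at hab
      exact add_right_cancel hab
    · intro y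
      obtain ⟨x, hx⟩ := hLbij.2 (y + c0)
      refine ⟨x, ?_⟩
      simp only [hAdef]
      rw [show α (π (es x)) = y + c0 from hx, add_assoc, hv2, add_zero]
  -- the master equation, parametrized by the syndrome
  have star : ∀ β, g ((c0 + α (π (es β))) + s + ζ • α (π (es (h β + β))))
      = ((c0 + α (π (es β))) + s + ζ • α (π (es (h β + β)))) + α (π (es (h β + β))) := by
    intro β
    have hp0 : (∑ t, ((if t = es 0 then (1 : ZMod 2) else 0) + (if t = es β then 1 else 0))) = 0 := by
      simp [Finset.sum_add_distrib, Finset.sum_ite_eq']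
      decide
    have hm := master _ hp0
    have hβs : (∑ t, ((if t = es 0 then (1 : ZMod 2) else 0) + (if t = es β then 1 else 0)) • α t)
        = β := by
      simp [add_smul, ite_smul, Finset.sum_add_distrib, Finset.sum_ite_eq', he]
    have hβπ : (∑ t, ((if t = es 0 then (1 : ZMod 2) else 0) + (if t = es β then 1 else 0)) • α (π t))
        = c0 + α (π (es β)) := by
      rw [hc0def]
      simp [add_smul, ite_smul, Finset.sum_add_distrib, Finset.sum_ite_eq']
    rw [hβs, hβπ] at hm
    exact hm
  -- invariant-subspace machinery
  have hGU : ∀ u : (Fin m' ⊕ Fin m'') → ZMod 2,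
      (∀ jj : Fin m'', u (Sum.inr jj) = 0) → ∀ jj : Fin m'', (g u + u) (Sum.inr jj) = 0 := by
    intro u hu jj
    show g u (Sum.inr jj) + u (Sum.inr jj) = 0
    rw [hgdef]
    show f'' (fun j => u (Sum.inr j)) jj + u (Sum.inr jj) = 0
    have hzz : (fun j => u (Sum.inr j)) = 0 := funext fun j => hu j
    rw [hzz, hlin''.map_zero, hu jj]
    simp
  set Vs : Set F := {x | ∀ jj : Fin m'', A (φ.symm x) (Sum.inr jj) = 0} with hVsdef
  have hVsmem : ∀ x : F, x ∈ Vs ↔ ∀ jj : Fin m'', A (φ.symm x) (Sum.inr jj) = 0 := by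
    intro x
    rw [hVsdef]
    simp only [Set.mem_setOf_eq]
  have hVadd : ∀ x y : F, x ∈ Vs → y ∈ Vs → x + y ∈ Vs := by
    intro x y hx hy
    rw [hVsmem]
    intro jj
    rw [map_add, hAadd]
    rw [Pi.add_apply, (hVsmem x).mp hx jj, (hVsmem y).mp hy jj, add_zero]
  obtain ⟨v1, hv1⟩ := hAbij.2 (fun t => Sum.elim (fun _ => (1 : ZMod 2)) (fun _ => 0) t)
  have hw0mem : φ v1 ∈ Vs := by
    rw [hVsmem]
    intro jj
    rw [φ.symm_apply_apply, hv1]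
    rfl
  have hw0ne : φ v1 ≠ 0 := by
    intro hcon
    have hv10 : v1 = 0 := by
      have hh := congrArg φ.symm hcon
      rwa [φ.symm_apply_apply, map_zero] at hh
    rw [hv10, hA0] at hv1
    have hcf := congrFun hv1 (Sum.inl (⟨0, hm'⟩ : Fin m'))
    simp at hcf
  obtain ⟨v2, hv2'⟩ := hAbij.2 (fun t => Sum.elim (fun _ => (0 : ZMod 2)) (fun _ => 1) t)
  have hy0 : φ v2 ∉ Vs := by
    intro hcon
    have h3 := (hVsmem _).mp hcon ⟨0, hm''⟩
    rw [φ.symm_apply_apply, hv2'] at h3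
    simp at h3
  have hy0ne : φ v2 ≠ 0 := by
    intro hcon
    have hv20 : v2 = 0 := by
      have hh := congrArg φ.symm hcon
      rwa [φ.symm_apply_apply, map_zero] at hh
    rw [hv20, hA0] at hv2'
    have hcf := congrFun hv2' (Sum.inr (⟨0, hm''⟩ : Fin m''))
    simp at hcf
  rcases z2cases ζ with hz | hz
  · -- ζ = 0
    have FE : ∀ β, g (A β) + A β = A (h β + β) := by
      intro β
      have hst := star β
      have hst0 := star 0
      rw [hz] at hst hst0
      simp only [zero_smul, add_zero] at hst hst0
      rw [hh0] at hst0
      rw [← hc0def] at hst0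
      rw [hv2 c0, zero_add] at hst0
      rw [hLA β, hLA (h β + β)] at hst
      have harg : (c0 + (A β + c0)) + s = A β + s := by
        have hr : (c0 + (A β + c0)) + s = (A β + s) + (c0 + c0) := by ring
        rw [hr, hv2, add_zero]
      rw [harg] at hst
      have hcomb : g (A β) + g s = (A β + s) + (A (h β + β) + c0) := by
        rw [← hgadd]
        exact hst
      rw [hst0] at hcomb
      have h3 : g (A β) + (s + c0) = (A β + A (h β + β)) + (s + c0) := hcomb.trans (by ring)
      have h4 := add_right_cancel h3
      rw [h4]
      exact hsw _ _
    have hmulγ : ∀ x ∈ Vs, γ * x ∈ Vs := by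
      have hmul1 : ∀ x ∈ Vs, (γ + 1) * x ∈ Vs := by
        intro x hx
        rw [hVsmem]
        intro jj
        have hfe := FE (φ.symm x)
        have hhx : h (φ.symm x) + φ.symm x = φ.symm ((γ + 1) * x) := by
          rw [hhdef, φ.apply_symm_apply, ← map_add]
          congr 1
          ring
        rw [hhx] at hfe
        rw [← hfe]
        exact hGU _ ((hVsmem x).mp hx) jj
      intro x hx
      have h2 := hVadd _ _ (hmul1 x hx) hx
      have hr : (γ + 1) * x + x = γ * x := by
        have hr2 : (γ + 1) * x + x = γ * x + (x + x) := by ring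
        rw [hr2, hF2, add_zero]
      rwa [hr] at h2
    exact hy0 (Vs_univ γ hγ Vs hmulγ (φ v1) hw0mem hw0ne (φ v2) hy0ne)
  · -- ζ = 1
    have FE : ∀ β, g (A (h β)) + A (h β) = A (h β + β) := by
      intro β
      have hst := star β
      have hst0 := star 0
      rw [hz] at hst hst0
      simp only [one_smul] at hst hst0
      rw [hh0, add_zero] at hst0
      rw [← hc0def] at hst0
      have harg0 : (c0 + c0) + s + c0 = s + c0 := by rw [hv2, zero_add]
      rw [harg0] at hst0
      have hkey : A β + A (h β + β) = A (h β) := by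
        rw [← hAadd]
        congr 1
        rw [add_comm (h β) β, ← add_assoc, hv2, zero_add]
      rw [hLA β, hLA (h β + β)] at hst
      have harg : (c0 + (A β + c0)) + s + (A (h β + β) + c0) = A (h β) + (s + c0) := by
        have hr : (c0 + (A β + c0)) + s + (A (h β + β) + c0)
            = (A β + A (h β + β)) + (s + c0) + (c0 + c0) := by ring
        rw [hr, hv2 c0, add_zero, hkey]
      rw [harg] at hst
      have hcomb : g (A (h β)) + g (s + c0) = (A (h β) + (s + c0)) + (A (h β + β) + c0) := by
        rw [← hgadd]
        exact hst
      rw [hst0] at hcomb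
      have h3 : g (A (h β)) + ((s + c0) + c0)
          = (A (h β) + A (h β + β)) + ((s + c0) + c0) := hcomb.trans (by ring)
      have h4 := add_right_cancel h3
      rw [h4]
      exact hsw _ _
    have hmulinv : ∀ x ∈ Vs, γ⁻¹ * x ∈ Vs := by
      have hmulν : ∀ x ∈ Vs, (1 + γ⁻¹) * x ∈ Vs := by
        intro x hx
        rw [hVsmem]
        intro jj
        have hfe := FE (φ.symm (γ⁻¹ * x))
        have hh1 : h (φ.symm (γ⁻¹ * x)) = φ.symm x := by
          rw [hhdef, φ.apply_symm_apply]
          congr 1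
          exact mul_inv_cancel_left₀ hγ0 x
        rw [hh1] at hfe
        have hh2 : φ.symm x + φ.symm (γ⁻¹ * x) = φ.symm ((1 + γ⁻¹) * x) := by
          rw [← map_add]
          congr 1
          ring
        rw [hh2] at hfe
        rw [← hfe]
        exact hGU _ ((hVsmem x).mp hx) jj
      intro x hx
      have h2 := hVadd _ _ (hmulν x hx) hx
      have hr : (1 + γ⁻¹) * x + x = γ⁻¹ * x := by
        have hr2 : (1 + γ⁻¹) * x + x = γ⁻¹ * x + (x + x) := by ring
        rw [hr2, hF2, add_zero]
      rwa [hr] at h2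
    have hmulγ : ∀ x ∈ Vs, γ * x ∈ Vs := by
      have hinv := inv_mem Vs γ⁻¹ (inv_ne_zero hγ0) hmulinv
      intro x hx
      have h2 := hinv x hx
      rwa [inv_inv] at h2
    exact hy0 (Vs_univ γ hγ Vs hmulγ (φ v1) hw0mem hw0ne (φ v2) hy0ne)
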